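/- Let N ≥ 1 be an integer, σ ∈ (0,2), and let g : ℝ^N → ℝ be a bounded C² function with bounded first and second derivatives. Then there exists a constant C > 0 such that for every x ∈ ℝ^N and every y ∈ (0,1], the principal value lim_{ε→0⁺} ∫_{{ξ : |ξ−x| > ε}} (g(ξ) − g(x)) (K_y(x,ξ) − K_0(x,ξ)) dξ exists, and its absolute value is at most C · y^{2−σ}. -/

import Mathlib

/-
Substituting `ξ = x ± h` and averaging turns the integrand into the second difference
`g (x + h) + g (x - h) - 2 g x`, which is `O(‖h‖²)`, times the kernel gap `K_0 - K_y` at `‖h‖`,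
which is nonnegative, at most `‖h‖^(-p)` and at most `(p/2) y² ‖h‖^(-p-2)` (`p = N + σ`).
Since `N < p < N + 2`, the majorant `‖h‖² (K_0 - K_y)(‖h‖)` is integrable near `0` and near `∞`,
so dominated convergence gives the principal value. By homogeneity,
`(K_0 - K_y)(r) = y^(-p) (K_0 - K_1)(r / y)`, and the substitution `h = y u` shows that the
integral of the majorant is `y^(N + 2 - p) = y^(2 - σ)` times a constant.
-/

open MeasureTheory Filter Set Module Topology

/-- `K_0 - K_y` at distance `r`, for the kernels of order `p = N + σ`. -/
noncomputable def kernelDiff (p y r : ℝ) : ℝ := r ^ (-p) - (r ^ 2 + y ^ 2) ^ (-p / 2)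

section KernelDiff

variable {p y r : ℝ}

lemma sq_rpow_neg_div_two (hr : 0 ≤ r) (q : ℝ) : (r ^ 2) ^ (-q / 2) = r ^ (-q) := by
  rw [← Real.rpow_natCast, ← Real.rpow_mul hr]
  congr 1
  ring

lemma kernelDiff_nonneg (hp : 0 ≤ p) (hr : 0 < r) : 0 ≤ kernelDiff p y r := by
  rw [kernelDiff, sub_nonneg, ← sq_rpow_neg_div_two hr.le]
  exact Real.rpow_le_rpow_of_nonpos (by positivity) (by nlinarith) (by linarith)

lemma sq_mul_kernelDiff_nonneg (hp : 0 ≤ p) (hr : 0 ≤ r) : 0 ≤ r ^ 2 * kernelDiff p y r := by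
  rcases hr.eq_or_lt with rfl | hr
  · simp
  · exact mul_nonneg (sq_nonneg r) (kernelDiff_nonneg hp hr)

lemma kernelDiff_le_rpow_neg : kernelDiff p y r ≤ r ^ (-p) :=
  sub_le_self _ (by positivity)

-- Mean value theorem for `t ↦ t ^ (-p / 2)` on `[r ^ 2, r ^ 2 + y ^ 2]`.
lemma kernelDiff_le_mul_rpow (hp : 0 < p) (hr : 0 < r) (hy : y ≠ 0) :
    kernelDiff p y r ≤ p / 2 * y ^ 2 * r ^ (-p - 2) := by
  have hr2 : 0 < r ^ 2 := by positivity
  have hy2 : 0 < y ^ 2 := by positivity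
  obtain ⟨c, hc, hslope⟩ := exists_hasDerivAt_eq_slope (fun t : ℝ => t ^ (-p / 2))
    (fun t => -p / 2 * t ^ (-p / 2 - 1)) (lt_add_of_pos_right _ hy2)
    (fun t ht =>
      (Real.continuousAt_rpow_const t _ (Or.inl (hr2.trans_le ht.1).ne')).continuousWithinAt)
    (fun t ht => Real.hasDerivAt_rpow_const (Or.inl (hr2.trans ht.1).ne'))
  rw [add_sub_cancel_left, eq_div_iff hy2.ne', sq_rpow_neg_div_two hr.le] at hslope
  have hc_le : c ^ (-p / 2 - 1) ≤ r ^ (-p - 2) := by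
    rw [show -p - 2 = -(p + 2) by ring, ← sq_rpow_neg_div_two hr.le,
      show -(p + 2) / 2 = -p / 2 - 1 by ring]
    exact Real.rpow_le_rpow_of_nonpos hr2 hc.1.le (by linarith)
  calc kernelDiff p y r = p / 2 * y ^ 2 * c ^ (-p / 2 - 1) := by rw [kernelDiff]; linarith
    _ ≤ p / 2 * y ^ 2 * r ^ (-p - 2) := by gcongr

lemma kernelDiff_eq_rpow_mul (hy : 0 < y) (hr : 0 ≤ r) :
    kernelDiff p y r = y ^ (-p) * kernelDiff p 1 (r / y) := by
  have hsum : r ^ 2 + y ^ 2 = y ^ 2 * ((r / y) ^ 2 + 1 ^ 2) := by field_simp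
  rw [kernelDiff, kernelDiff, hsum, Real.mul_rpow (by positivity) (by positivity),
    sq_rpow_neg_div_two hy.le, Real.div_rpow hr hy.le, mul_sub,
    mul_div_cancel₀ _ (by positivity)]

lemma sq_mul_kernelDiff_eq (hy : 0 < y) (hr : 0 ≤ r) :
    r ^ 2 * kernelDiff p y r = y ^ (2 - p) * ((r / y) ^ 2 * kernelDiff p 1 (r / y)) := by
  rw [kernelDiff_eq_rpow_mul hy hr, Real.rpow_sub hy, Real.rpow_two, Real.rpow_neg hy.le, div_pow]
  field_simp

end KernelDiff

lemma integrableOn_Ioi_of_le_rpow {f : ℝ → ℝ}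
    (hf : AEStronglyMeasurable f (volume.restrict (Ioi 0))) {a b C D : ℝ} (ha : -1 < a)
    (hb : b < -1)
    (h0 : ∀ r ∈ Ioc (0 : ℝ) 1, ‖f r‖ ≤ C * r ^ a) (h1 : ∀ r ∈ Ioi (1 : ℝ), ‖f r‖ ≤ D * r ^ b) :
    IntegrableOn f (Ioi 0) := by
  rw [← Ioc_union_Ioi_eq_Ioi zero_le_one]
  refine IntegrableOn.union ?_ ?_
  · refine Integrable.mono' (((intervalIntegrable_iff_integrableOn_Ioc_of_le zero_le_one).1
      (intervalIntegral.intervalIntegrable_rpow' ha)).const_mul C)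
      (hf.mono_set Ioc_subset_Ioi_self) ?_
    exact (ae_restrict_iff' measurableSet_Ioc).2 (.of_forall h0)
  · refine Integrable.mono' ((integrableOn_Ioi_rpow_of_lt hb zero_lt_one).const_mul D)
      (hf.mono_set (Ioi_subset_Ioi zero_le_one)) ?_
    exact (ae_restrict_iff' measurableSet_Ioi).2 (.of_forall h1)

lemma norm_add_add_sub_two_smul_le {E F : Type*} [NormedAddCommGroup E] [NormedSpace ℝ E]
    [NormedAddCommGroup F] [NormedSpace ℝ F] {g : E → F} (hg : ContDiff ℝ 2 g) {M : ℝ}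
    (hg2 : ∀ z, ‖iteratedFDeriv ℝ 2 g z‖ ≤ M) (x h : E) :
    ‖g (x + h) + g (x - h) - (2 : ℝ) • g x‖ ≤ 2 * M * ‖h‖ ^ 2 := by
  have hM : 0 ≤ M := (norm_nonneg _).trans (hg2 x)
  have hdg : Differentiable ℝ g := hg.differentiable (by norm_num)
  have hDg_lip : LipschitzWith (Real.toNNReal M) (fderiv ℝ g) := by
    refine lipschitzWith_of_nnnorm_fderiv_le
      ((hg.fderiv_right (m := 1) (by norm_num)).differentiable (by norm_num)) fun z => ?_
    rw [← NNReal.coe_le_coe, coe_nnnorm, Real.coe_toNNReal _ hM,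
      ← norm_iteratedFDeriv_zero (𝕜 := ℝ), norm_iteratedFDeriv_fderiv, norm_iteratedFDeriv_fderiv]
    exact hg2 z
  -- `t ↦ g (x + t • h) + g (x - t • h)` has derivative `ψ' t`, of norm at most `2 M ‖h‖ ^ 2`
  -- on `[0, 1]` because `fderiv ℝ g` is `M`-Lipschitz.
  set ψ' : ℝ → F := fun t => fderiv ℝ g (x + t • h) h - fderiv ℝ g (x - t • h) h
  have hψ : ∀ t : ℝ, HasDerivAt (fun t : ℝ => g (x + t • h) + g (x - t • h)) (ψ' t) t := by
    intro t
    have h₁ := (hdg (x + t • h)).hasFDerivAt.comp_hasDerivAt t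
      (((hasDerivAt_id t).smul_const h).const_add x)
    have h₂ := (hdg (x - t • h)).hasFDerivAt.comp_hasDerivAt t
      (((hasDerivAt_id t).smul_const h).const_sub x)
    simpa [ψ', sub_eq_add_neg, Function.comp_def, Pi.add_def] using h₁.add h₂
  have hψ'_le : ∀ t ∈ Icc (0 : ℝ) 1, ‖ψ' t‖ ≤ 2 * M * ‖h‖ ^ 2 := by
    rintro t ⟨ht0, ht1⟩
    have hlip := hDg_lip.dist_le_mul (x + t • h) (x - t • h)
    rw [dist_eq_norm, dist_eq_norm, Real.coe_toNNReal _ hM,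
      show x + t • h - (x - t • h) = (2 * t) • h by module, norm_smul,
      Real.norm_of_nonneg (by positivity)] at hlip
    calc ‖ψ' t‖ = ‖(fderiv ℝ g (x + t • h) - fderiv ℝ g (x - t • h)) h‖ := rfl
      _ ≤ ‖fderiv ℝ g (x + t • h) - fderiv ℝ g (x - t • h)‖ * ‖h‖ :=
          ContinuousLinearMap.le_opNorm _ h
      _ ≤ M * (2 * t * ‖h‖) * ‖h‖ := by gcongr
      _ ≤ 2 * M * ‖h‖ ^ 2 := by
          nlinarith [mul_nonneg (mul_nonneg hM (sub_nonneg.2 ht1)) (sq_nonneg ‖h‖)]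
  have := (convex_Icc (0 : ℝ) 1).norm_image_sub_le_of_norm_hasDerivWithin_le
    (fun t _ => (hψ t).hasDerivWithinAt) hψ'_le (left_mem_Icc.2 zero_le_one)
    (right_mem_Icc.2 zero_le_one)
  simpa [two_smul] using this

section PrincipalValue

variable {E F : Type*} [NormedAddCommGroup E] [MeasurableSpace E] [BorelSpace E]
  [NormedAddCommGroup F] [NormedSpace ℝ F] {μ : Measure E}

lemma measurableSet_norm_gt (ε : ℝ) : MeasurableSet {h : E | ε < ‖h‖} :=
  measurableSet_lt measurable_const measurable_norm

lemma measurableSet_dist_gt (ε : ℝ) (x : E) : MeasurableSet {ξ : E | ε < dist ξ x} :=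
  measurableSet_lt (f := fun _ => ε) measurable_const (by fun_prop)

lemma setIntegral_dist_gt_eq_setIntegral_add [μ.IsAddLeftInvariant] (f : E → F) (x : E) (ε : ℝ) :
    ∫ ξ in {ξ | ε < dist ξ x}, f ξ ∂μ = ∫ h in {h | ε < ‖h‖}, f (x + h) ∂μ := by
  rw [← integral_indicator (measurableSet_dist_gt ε x),
    ← integral_indicator (measurableSet_norm_gt ε), ← integral_add_left_eq_self _ x]
  congr 1
  ext h
  simp [indicator, dist_eq_norm]

lemma setIntegral_dist_gt_eq_setIntegral_sub [μ.IsAddLeftInvariant] [μ.IsNegInvariant]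
    (f : E → F) (x : E) (ε : ℝ) :
    ∫ ξ in {ξ | ε < dist ξ x}, f ξ ∂μ = ∫ h in {h | ε < ‖h‖}, f (x - h) ∂μ := by
  rw [← integral_indicator (measurableSet_dist_gt ε x),
    ← integral_indicator (measurableSet_norm_gt ε), ← integral_sub_left_eq_self _ μ x]
  congr 1
  ext h
  simp [indicator, dist_eq_norm, norm_sub_rev]

lemma setIntegral_dist_gt_eq_inv_two_smul [μ.IsAddLeftInvariant] [μ.IsNegInvariant] {f : E → F}
    {x : E} {ε : ℝ} (hadd : IntegrableOn (fun h => f (x + h)) {h | ε < ‖h‖} μ)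
    (hsub : IntegrableOn (fun h => f (x - h)) {h | ε < ‖h‖} μ) :
    ∫ ξ in {ξ | ε < dist ξ x}, f ξ ∂μ
      = (2⁻¹ : ℝ) • ∫ h in {h | ε < ‖h‖}, (f (x + h) + f (x - h)) ∂μ := by
  rw [integral_add hadd hsub, ← setIntegral_dist_gt_eq_setIntegral_add,
    ← setIntegral_dist_gt_eq_setIntegral_sub, ← two_smul ℝ, smul_smul,
    inv_mul_cancel₀ two_ne_zero, one_smul]

lemma tendsto_setIntegral_norm_gt [NullSingletonClass μ] {f : E → F}
    (hf : Integrable f μ) :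
    Tendsto (fun ε => ∫ h in {h | ε < ‖h‖}, f h ∂μ) (𝓝[>] 0) (𝓝 (∫ h, f h ∂μ)) := by
  simp_rw [← integral_indicator (measurableSet_norm_gt _)]
  refine tendsto_integral_filter_of_dominated_convergence (‖f ·‖)
    (.of_forall fun ε => hf.aestronglyMeasurable.indicator (measurableSet_norm_gt ε))
    (.of_forall fun ε => .of_forall fun h => norm_indicator_le_norm_self f h) hf.norm ?_
  filter_upwards [compl_mem_ae_iff.2 (measure_singleton (μ := μ) 0)] with h (hh : h ≠ 0)
  refine tendsto_const_nhds.congr' ?_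
  filter_upwards [Ioo_mem_nhdsGT (norm_pos_iff.2 hh)] with ε hε
  exact (indicator_of_mem (show h ∈ {h : E | ε < ‖h‖} from hε.2) f).symm

end PrincipalValue

section TwoPoint

variable {E : Type*} [NormedAddCommGroup E] [NormedSpace ℝ E] {g : E → ℝ} {M p y : ℝ}

lemma norm_sq_mul_kernelDiff_eq (hy : 0 < y) :
    (fun h : E => ‖h‖ ^ 2 * kernelDiff p y ‖h‖)
      = fun h => y ^ (2 - p) * (‖y⁻¹ • h‖ ^ 2 * kernelDiff p 1 ‖y⁻¹ • h‖) := by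
  ext h
  rw [sq_mul_kernelDiff_eq hy (norm_nonneg h), norm_smul, Real.norm_of_nonneg (inv_nonneg.2 hy.le),
    inv_mul_eq_div]

lemma abs_secondDiff_mul_kernelDiff_le (hg : ContDiff ℝ 2 g)
    (hg2 : ∀ z, ‖iteratedFDeriv ℝ 2 g z‖ ≤ M) (hp : 0 ≤ p) (x h : E) :
    |(g (x + h) + g (x - h) - 2 * g x) * kernelDiff p y ‖h‖|
      ≤ 2 * M * (‖h‖ ^ 2 * kernelDiff p y ‖h‖) := by
  have hsd := norm_add_add_sub_two_smul_le hg hg2 x h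
  rw [Real.norm_eq_abs, smul_eq_mul] at hsd
  calc |(g (x + h) + g (x - h) - 2 * g x) * kernelDiff p y ‖h‖|
      ≤ 2 * M * ‖h‖ ^ 2 * |kernelDiff p y ‖h‖| := by rw [abs_mul]; gcongr
    _ = 2 * M * (‖h‖ ^ 2 * kernelDiff p y ‖h‖) := by
      rw [mul_assoc, ← abs_of_nonneg (sq_nonneg ‖h‖), ← abs_mul, abs_of_nonneg (sq_nonneg ‖h‖),
        abs_of_nonneg (sq_mul_kernelDiff_nonneg hp (norm_nonneg h))]

variable [FiniteDimensional ℝ E] [MeasurableSpace E] [BorelSpace E] (μ : Measure E)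
  [μ.IsAddHaarMeasure]

lemma integrable_norm_sq_mul_kernelDiff_one [Nontrivial E] (hlo : finrank ℝ E < p)
    (hhi : p < finrank ℝ E + 2) :
    Integrable (fun u : E => ‖u‖ ^ 2 * kernelDiff p 1 ‖u‖) μ := by
  set n := finrank ℝ E
  have hn : n - 1 + 2 = n + 1 := by have : 0 < n := finrank_pos; omega
  have hp : 0 < p := lt_of_le_of_lt (Nat.cast_nonneg n) hlo
  have hpow : ∀ r > (0 : ℝ), ∀ s : ℝ, r ^ (n + 1) * r ^ s = r ^ ((n : ℝ) + 1 + s) := by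
    intro r hr s
    rw [← Real.rpow_natCast, ← Real.rpow_add hr]
    push_cast
    ring_nf
  have hnorm : ∀ r > (0 : ℝ), ‖r ^ (n - 1) • (r ^ 2 * kernelDiff p 1 r)‖
      = r ^ (n + 1) * kernelDiff p 1 r := fun r hr => by
    rw [smul_eq_mul, ← mul_assoc, ← pow_add, hn, Real.norm_of_nonneg]
    exact mul_nonneg (by positivity) (kernelDiff_nonneg hp.le hr)
  rw [integrable_fun_norm_addHaar μ (f := fun r => r ^ 2 * kernelDiff p 1 r)]
  refine integrableOn_Ioi_of_le_rpow (C := 1) (D := p / 2) (a := n + 1 - p) (b := n - 1 - p)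
    (by unfold kernelDiff; fun_prop) (by linarith) (by linarith) (fun r hr => ?_) (fun r hr => ?_)
  · have hr0 : 0 < r := hr.1
    rw [hnorm r hr0, one_mul, sub_eq_add_neg, ← hpow r hr0]
    gcongr
    exact kernelDiff_le_rpow_neg
  · have hr0 : 0 < r := zero_lt_one.trans hr
    calc ‖r ^ (n - 1) • (r ^ 2 * kernelDiff p 1 r)‖ = r ^ (n + 1) * kernelDiff p 1 r := hnorm r hr0
      _ ≤ r ^ (n + 1) * (p / 2 * 1 ^ 2 * r ^ (-p - 2)) := by
          gcongr; exact kernelDiff_le_mul_rpow hp hr0 one_ne_zero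
      _ = p / 2 * r ^ ((n : ℝ) - 1 - p) := by
          rw [one_pow, mul_one, mul_left_comm, hpow r hr0]; ring_nf

lemma integrable_norm_sq_mul_kernelDiff [Nontrivial E] (hlo : finrank ℝ E < p)
    (hhi : p < finrank ℝ E + 2) (hy : 0 < y) :
    Integrable (fun h : E => ‖h‖ ^ 2 * kernelDiff p y ‖h‖) μ := by
  rw [norm_sq_mul_kernelDiff_eq hy]
  exact ((integrable_norm_sq_mul_kernelDiff_one μ hlo hhi).comp_smul
    (inv_ne_zero hy.ne')).const_mul _

lemma integral_norm_sq_mul_kernelDiff (hy : 0 < y) :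
    ∫ h : E, ‖h‖ ^ 2 * kernelDiff p y ‖h‖ ∂μ
      = y ^ (finrank ℝ E + 2 - p) * ∫ u : E, ‖u‖ ^ 2 * kernelDiff p 1 ‖u‖ ∂μ := by
  rw [norm_sq_mul_kernelDiff_eq hy, integral_const_mul,
    Measure.integral_comp_inv_smul_of_nonneg μ (fun u => ‖u‖ ^ 2 * kernelDiff p 1 ‖u‖) hy.le,
    smul_eq_mul, ← mul_assoc, ← Real.rpow_natCast, ← Real.rpow_add hy]
  ring_nf

lemma integrableOn_mul_kernelDiff_norm_gt [Nontrivial E] {b : E → ℝ}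
    (hb : AEStronglyMeasurable b μ) {B : ℝ} (hbB : ∀ h, |b h| ≤ B) (hlo : finrank ℝ E < p)
    (hhi : p < finrank ℝ E + 2) (hy : 0 < y) {ε : ℝ} (hε : 0 < ε) :
    IntegrableOn (fun h => b h * kernelDiff p y ‖h‖) {h | ε < ‖h‖} μ := by
  have hp : 0 ≤ p := (Nat.cast_nonneg _).trans hlo.le
  refine Integrable.mono' (((integrable_norm_sq_mul_kernelDiff μ hlo hhi hy).const_mul
    (B / ε ^ 2)).integrableOn) (hb.mul (by unfold kernelDiff; fun_prop)).restrict ?_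
  refine (ae_restrict_iff' (measurableSet_norm_gt ε)).2 (.of_forall fun h (hh : ε < ‖h‖) => ?_)
  have hk := kernelDiff_nonneg (y := y) hp (hε.trans hh)
  have hB : 0 ≤ B := (abs_nonneg _).trans (hbB h)
  have hratio : 1 ≤ ‖h‖ ^ 2 / ε ^ 2 := by
    rw [one_le_div (by positivity)]
    gcongr
  calc ‖b h * kernelDiff p y ‖h‖‖ = |b h| * kernelDiff p y ‖h‖ := by
        rw [Real.norm_eq_abs, abs_mul, abs_of_nonneg hk]
    _ ≤ B * kernelDiff p y ‖h‖ := by gcongr; exact hbB h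
    _ ≤ B * (‖h‖ ^ 2 / ε ^ 2) * kernelDiff p y ‖h‖ := by
        gcongr; exact le_mul_of_one_le_right hB hratio
    _ = B / ε ^ 2 * (‖h‖ ^ 2 * kernelDiff p y ‖h‖) := by ring

theorem exists_tendsto_setIntegral_dist_gt_and_abs_le [Nontrivial E] (hg : ContDiff ℝ 2 g)
    (hg0 : ∀ z, |g z| ≤ M) (hg2 : ∀ z, ‖iteratedFDeriv ℝ 2 g z‖ ≤ M)
    (hlo : finrank ℝ E < p) (hhi : p < finrank ℝ E + 2) (x : E) (hy : 0 < y) :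
    ∃ L : ℝ,
      Tendsto (fun ε => ∫ ξ in {ξ | ε < dist ξ x}, (g ξ - g x) * kernelDiff p y (dist x ξ) ∂μ)
        (𝓝[>] 0) (𝓝 L) ∧
      |L| ≤ M * y ^ (finrank ℝ E + 2 - p) * ∫ u, ‖u‖ ^ 2 * kernelDiff p 1 ‖u‖ ∂μ := by
  have hp : 0 ≤ p := (Nat.cast_nonneg _).trans hlo.le
  have hM : 0 ≤ M := (abs_nonneg _).trans (hg0 x)
  have hgm : Measurable g := hg.continuous.measurable
  set G : E → ℝ := fun h => (g (x + h) + g (x - h) - 2 * g x) * kernelDiff p y ‖h‖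
  have hG_le : ∀ h, |G h| ≤ 2 * M * (‖h‖ ^ 2 * kernelDiff p y ‖h‖) :=
    abs_secondDiff_mul_kernelDiff_le hg hg2 hp x
  have hG : Integrable G μ :=
    ((integrable_norm_sq_mul_kernelDiff μ hlo hhi hy).const_mul (2 * M)).mono'
      (by unfold G kernelDiff; fun_prop) (.of_forall hG_le)
  have hsymm : ∀ ε > 0, ∫ ξ in {ξ | ε < dist ξ x}, (g ξ - g x) * kernelDiff p y (dist x ξ) ∂μ
      = 2⁻¹ * ∫ h in {h | ε < ‖h‖}, G h ∂μ := by
    intro ε hε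
    have hdiff : ∀ z, |g z - g x| ≤ 2 * M := fun z =>
      (abs_sub _ _).trans (by linarith [hg0 z, hg0 x])
    rw [setIntegral_dist_gt_eq_inv_two_smul]
    · simp only [dist_self_add_right, dist_self_sub_right, smul_eq_mul, G]
      congr 1
      refine setIntegral_congr_fun (measurableSet_norm_gt ε) fun h _ => by ring
    · simpa only [dist_self_add_right] using integrableOn_mul_kernelDiff_norm_gt μ
        (b := fun h => g (x + h) - g x) (by fun_prop) (fun h => hdiff _) hlo hhi hy hε
    · simpa only [dist_self_sub_right] using integrableOn_mul_kernelDiff_norm_gt μ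
        (b := fun h => g (x - h) - g x) (by fun_prop) (fun h => hdiff _) hlo hhi hy hε
  refine ⟨2⁻¹ * ∫ h, G h ∂μ, ((tendsto_setIntegral_norm_gt hG).const_mul _).congr' ?_, ?_⟩
  · filter_upwards [self_mem_nhdsWithin] with ε hε using (hsymm ε hε).symm
  · calc |2⁻¹ * ∫ h, G h ∂μ| ≤ 2⁻¹ * ∫ h, 2 * M * (‖h‖ ^ 2 * kernelDiff p y ‖h‖) ∂μ := by
          rw [abs_mul, abs_of_pos (by norm_num)]
          gcongr
          exact (abs_integral_le_integral_abs).trans (integral_mono hG.abs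
            ((integrable_norm_sq_mul_kernelDiff μ hlo hhi hy).const_mul _) hG_le)
      _ = M * y ^ (finrank ℝ E + 2 - p) * ∫ u, ‖u‖ ^ 2 * kernelDiff p 1 ‖u‖ ∂μ := by
          rw [integral_const_mul, integral_norm_sq_mul_kernelDiff μ hy]
          ring

end TwoPoint

theorem stmt0 (N : ℕ) (hN : 1 ≤ N) (σ : ℝ) (hσ : σ ∈ Set.Ioo (0:ℝ) 2)
    (g : EuclideanSpace ℝ (Fin N) → ℝ) (hg : ContDiff ℝ 2 g) (M : ℝ)
    (hg0 : ∀ x, |g x| ≤ M)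
    (hg2 : ∀ x, ‖iteratedFDeriv ℝ 2 g x‖ ≤ M) :
    ∃ C > 0, ∀ (x : EuclideanSpace ℝ (Fin N)), ∀ y ∈ Set.Ioc (0:ℝ) 1,
      ∃ L : ℝ,
        Tendsto
          (fun ε : ℝ =>
            ∫ ξ in {ξ : EuclideanSpace ℝ (Fin N) | ε < dist ξ x},
              (g ξ - g x) *
                ((dist x ξ ^ 2 + y ^ 2) ^ (-((N : ℝ) + σ) / 2)
                  - dist x ξ ^ (-((N : ℝ) + σ))))
          (nhdsWithin 0 (Set.Ioi 0)) (nhds L)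
        ∧ |L| ≤ C * y ^ (2 - σ) := by
  obtain ⟨hσ0, hσ2⟩ := hσ
  have : Nonempty (Fin N) := Fin.pos_iff_nonempty.mp hN
  have hdim : (finrank ℝ (EuclideanSpace ℝ (Fin N)) : ℝ) = N := by simp
  set I := ∫ u : EuclideanSpace ℝ (Fin N), ‖u‖ ^ 2 * kernelDiff (N + σ) 1 ‖u‖
  have hI : 0 ≤ I :=
    integral_nonneg fun u => sq_mul_kernelDiff_nonneg (by positivity) (norm_nonneg u)
  have hM : 0 ≤ M := (abs_nonneg _).trans (hg0 0)
  refine ⟨M * I + 1, by positivity, fun x y ⟨hy, _⟩ => ?_⟩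
  obtain ⟨L, hL, hL_le⟩ := exists_tendsto_setIntegral_dist_gt_and_abs_le volume hg hg0 hg2
    (p := N + σ) (by rw [hdim]; linarith) (by rw [hdim]; linarith) x hy
  rw [hdim, show (N : ℝ) + 2 - (N + σ) = 2 - σ by ring] at hL_le
  refine ⟨-L, hL.neg.congr fun ε => ?_, ?_⟩
  · rw [← integral_neg]
    refine integral_congr_ae (.of_forall fun ξ => ?_)
    simp only [kernelDiff]
    ring
  · have hyσ : 0 < y ^ (2 - σ) := by positivity
    rw [abs_neg]
    nlinarith
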